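/- arXiv:2105.02457 — 6 statements merged into one kernel-verified Lean document; each statement's English description precedes it below -/
import Mathlib

section
/- In a bipartite market with workers W partitioned into W^A and W^B, and jobs J partitioned into J^A, J^{AB}, J^B, where eligibility compatibility C^- makes workers in W^A compatible with J^A ∪ J^{AB} and workers in W^B compatible with J^{AB} ∪ J^B, any matching produced by the following greedy procedure minimizes unfilled jobs (i.e., has maximum cardinality among all feasible matchings): process workers in W^A one at a time, matching each to an available job in J^A if one exists, otherwise to an available job in J^{AB} if one exists; then process workers in W^B one at a time, matching each to an available job in J^{AB} if one exists, otherwise to an available job in J^B if one exists. -/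
section GreedyDefs

variable {W J : Type} [DecidableEq W] [DecidableEq J]

/-- One step of the greedy assignment: worker `w` is matched to the first job in
his priority list that is compatible with him and still available. -/
def greedyStep (C : W → J → Bool) (pref : W → List J)
    (st : List (W × J) × Finset J) (w : W) : List (W × J) × Finset J :=
  match (pref w).find? (fun j => C w j && decide (j ∈ st.2)) with
  | some j => (st.1 ++ [(w, j)], st.2.erase j)
  | none => st

/-- The greedy sequential procedure: workers are processed in `order`, each
irrevocably matched to his highest-priority available compatible job (if any). -/
def greedy (C : W → J → Bool) (order : List W) (pref : W → List J)
    (jobs : Finset J) : List (W × J) :=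
  (order.foldl (greedyStep C pref) ([], jobs)).1

/-- A feasible matching: compatible pairs, injective on workers and on jobs. -/
def IsMatching (C : W → J → Bool) (M : Finset (W × J)) : Prop :=
  (∀ p ∈ M, C p.1 p.2 = true) ∧
  (∀ p ∈ M, ∀ q ∈ M, p.1 = q.1 → p = q) ∧
  (∀ p ∈ M, ∀ q ∈ M, p.2 = q.2 → p = q)

/-- `l` enumerates the finite set `S` (each element exactly once). -/
def Enum {α : Type} [DecidableEq α] (l : List α) (S : Finset α) : Prop :=
  l.Nodup ∧ l.toFinset = S

end GreedyDefs

/-!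
Within a phase all workers rank the same tier `S1` above `S2` and are eligible for both, so the
greedy phase with `n` workers fills `min n (a₁ + a₂)` jobs, taking `S1` jobs first, and leaves
`min a₂ (a₁ + a₂ - n)` jobs of `S2`; jobs incompatible with the phase are untouched. Hence the
`W^A` phase leaves all of `J^B` and as much of `J^{AB}` as possible, and the greedy count reaches
one of the two bounds every matching obeys: `|M| ≤ |J|`, and
`|M| ≤ min |W^A| |J^A ∪ J^{AB}| + min |W^B| |J^{AB} ∪ J^B|` from counting each worker class
against its workers and its eligible jobs.
-/

open Finset

section Greedy

variable {W J : Type} [DecidableEq J]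

lemma Enum.mem_iff {α : Type} [DecidableEq α] {l : List α} {S : Finset α} (h : Enum l S)
    {a : α} : a ∈ l ↔ a ∈ S := by
  rw [← h.2, List.mem_toFinset]

lemma Enum.length_eq {α : Type} [DecidableEq α] {l : List α} {S : Finset α} (h : Enum l S) :
    l.length = #S := by
  rw [← h.2, List.toFinset_card_of_nodup h.1]

def TieredPref (C : W → J → Bool) (pref : W → List J) (S1 S2 : Finset J) (w : W) : Prop :=
  (∃ l1 l2, pref w = l1 ++ l2 ∧ Enum l1 S1 ∧ Enum l2 S2) ∧ ∀ j ∈ S1 ∪ S2, C w j = true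

variable {C : W → J → Bool} {pref : W → List J}

lemma mem_inter_of_find?_available {w : W} {l : List J} {S av : Finset J} {j : J}
    (hl : Enum l S) (h : l.find? (fun j => C w j && decide (j ∈ av)) = some j) :
    j ∈ av ∩ S := by
  have hj := List.find?_some h
  simp only [Bool.and_eq_true, decide_eq_true_eq] at hj
  exact mem_inter.2 ⟨hj.2, hl.mem_iff.1 (List.mem_of_find?_eq_some h)⟩

lemma inter_eq_empty_of_find?_available {w : W} {l : List J} {S av : Finset J}
    (hl : Enum l S) (hC : ∀ j ∈ S, C w j = true)
    (h : l.find? (fun j => C w j && decide (j ∈ av)) = none) : av ∩ S = ∅ := by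
  refine eq_empty_of_forall_notMem fun j hj => ?_
  rw [mem_inter] at hj
  have := List.find?_eq_none.1 h j (hl.mem_iff.2 hj.2)
  simp [hC j hj.2, hj.1] at this

lemma greedyStep_of_tieredPref {S1 S2 : Finset J} {w : W} (hw : TieredPref C pref S1 S2 w)
    (st : List (W × J) × Finset J) :
    (∃ j ∈ st.2 ∩ S1, greedyStep C pref st w = (st.1 ++ [(w, j)], st.2.erase j)) ∨
    (st.2 ∩ S1 = ∅ ∧
      ∃ j ∈ st.2 ∩ S2, greedyStep C pref st w = (st.1 ++ [(w, j)], st.2.erase j)) ∨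
    (st.2 ∩ S1 = ∅ ∧ st.2 ∩ S2 = ∅ ∧ greedyStep C pref st w = st) := by
  obtain ⟨⟨l1, l2, hpref, hl1, hl2⟩, hC⟩ := hw
  have hC1 : ∀ j ∈ S1, C w j = true := fun j hj => hC j (mem_union_left _ hj)
  have hC2 : ∀ j ∈ S2, C w j = true := fun j hj => hC j (mem_union_right _ hj)
  cases h1 : l1.find? (fun j => C w j && decide (j ∈ st.2)) with
  | some j =>
    exact Or.inl ⟨j, mem_inter_of_find?_available hl1 h1,
      by simp only [greedyStep, hpref, List.find?_append, h1, Option.some_or]⟩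
  | none =>
    have hS1 := inter_eq_empty_of_find?_available hl1 hC1 h1
    cases h2 : l2.find? (fun j => C w j && decide (j ∈ st.2)) with
    | some j =>
      exact Or.inr (Or.inl ⟨hS1, j, mem_inter_of_find?_available hl2 h2,
        by simp only [greedyStep, hpref, List.find?_append, h1, h2, Option.none_or]⟩)
    | none =>
      exact Or.inr (Or.inr ⟨hS1, inter_eq_empty_of_find?_available hl2 hC2 h2,
        by simp only [greedyStep, hpref, List.find?_append, h1, h2, Option.none_or]⟩)

lemma card_erase_inter {α : Type} [DecidableEq α] (s t : Finset α) (a : α) :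
    #(s.erase a ∩ t) = if a ∈ s ∩ t then #(s ∩ t) - 1 else #(s ∩ t) := by
  rw [erase_inter, card_erase_eq_ite]

lemma foldl_greedyStep_of_tieredPref {S1 S2 : Finset J} (hS : Disjoint S1 S2) (order : List W)
    (horder : ∀ w ∈ order, TieredPref C pref S1 S2 w) (st : List (W × J) × Finset J) :
    (order.foldl (greedyStep C pref) st).1.length
        = st.1.length + min order.length (#(st.2 ∩ S1) + #(st.2 ∩ S2)) ∧
    #((order.foldl (greedyStep C pref) st).2 ∩ S2)
        = min #(st.2 ∩ S2) (#(st.2 ∩ S1) + #(st.2 ∩ S2) - order.length) := by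
  induction order generalizing st with
  | nil => simp
  | cons w order ih =>
    have ih' := ih (fun w' hw' => horder w' (List.mem_cons_of_mem _ hw'))
    rw [List.foldl_cons, List.length_cons]
    rcases greedyStep_of_tieredPref (horder w List.mem_cons_self) st with
      ⟨j, hj, hstep⟩ | ⟨hS1, j, hj, hstep⟩ | ⟨hS1, hS2, hstep⟩
    · have hj2 : j ∉ st.2 ∩ S2 := fun h =>
        disjoint_left.1 hS (mem_inter.1 hj).2 (mem_inter.1 h).2
      have hpos := card_pos.2 ⟨j, hj⟩
      rw [hstep]
      simp only [ih', card_erase_inter, hj, hj2, if_true, if_false, List.length_append,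
        List.length_singleton]
      omega
    · have hpos := card_pos.2 ⟨j, hj⟩
      rw [hstep]
      simp only [ih', card_erase_inter, hj, hS1, notMem_empty, if_true, if_false,
        List.length_append, List.length_singleton, card_empty]
      omega
    · rw [hstep]
      simp only [ih', hS1, hS2, card_empty]
      omega

lemma mem_foldl_greedyStep_snd_of_forall_eq_false {j : J} (order : List W)
    (hj : ∀ w ∈ order, C w j = false) (st : List (W × J) × Finset J) (hst : j ∈ st.2) :
    j ∈ (order.foldl (greedyStep C pref) st).2 := by
  induction order generalizing st with
  | nil => exact hst
  | cons w order ih =>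
    refine ih (fun w' hw' => hj w' (List.mem_cons_of_mem _ hw')) _ ?_
    unfold greedyStep
    split
    next j' hfind =>
      have hj' := List.find?_some hfind
      have hne : j ≠ j' := by
        rintro rfl
        simp [hj w List.mem_cons_self] at hj'
      exact mem_erase.2 ⟨hne, hst⟩
    next => exact hst

lemma length_greedy_append_of_tieredPref {JA JAB JB : Finset J} (hJ1 : Disjoint JA JAB)
    (hJ3 : Disjoint JAB JB) {orderA orderB : List W}
    (hA : ∀ w ∈ orderA, TieredPref C pref JA JAB w) (hB : ∀ w ∈ orderB, TieredPref C pref JAB JB w)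
    (hAJB : ∀ w ∈ orderA, ∀ j ∈ JB, C w j = false) :
    (greedy C (orderA ++ orderB) pref (JA ∪ JAB ∪ JB)).length
      = min orderA.length (#JA + #JAB)
        + min orderB.length (min #JAB (#JA + #JAB - orderA.length) + #JB) := by
  set stA := orderA.foldl (greedyStep C pref) ([], JA ∪ JAB ∪ JB)
  obtain ⟨hlenA, hleftA⟩ := foldl_greedyStep_of_tieredPref hJ1 orderA hA ([], JA ∪ JAB ∪ JB)
  have hJB : JB ⊆ stA.2 := fun j hj =>
    mem_foldl_greedyStep_snd_of_forall_eq_false orderA (fun w hw => hAJB w hw j hj) _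
      (mem_union_right _ hj)
  obtain ⟨hlenB, -⟩ := foldl_greedyStep_of_tieredPref hJ3 orderB hB stA
  rw [greedy, List.foldl_append, hlenB, hlenA, hleftA, inter_eq_right.2 hJB,
    inter_eq_right.2 (subset_union_left.trans subset_union_left),
    inter_eq_right.2 (subset_union_right.trans subset_union_left), List.length_nil, zero_add]

end Greedy

section Matching

variable {W J : Type} {C : W → J → Bool} {M : Finset (W × J)}

lemma IsMatching.card_le_of_fst_mem (hM : IsMatching C M) {T : Finset W}
    (hT : ∀ p ∈ M, p.1 ∈ T) : #M ≤ #T :=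
  card_le_card_of_injOn Prod.fst hT fun p hp q hq h => hM.2.1 p hp q hq h

lemma IsMatching.card_le_of_snd_mem (hM : IsMatching C M) {U : Finset J}
    (hU : ∀ p ∈ M, p.2 ∈ U) : #M ≤ #U :=
  card_le_card_of_injOn Prod.snd hU fun p hp q hq h => hM.2.2 p hp q hq h

lemma IsMatching.subset {M' : Finset (W × J)} (hM : IsMatching C M) (h : M' ⊆ M) :
    IsMatching C M' :=
  ⟨fun p hp => hM.1 p (h hp), fun p hp q hq => hM.2.1 p (h hp) q (h hq),
    fun p hp q hq => hM.2.2 p (h hp) q (h hq)⟩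

lemma IsMatching.card_filter_le_min [DecidableEq W] (hM : IsMatching C M) {T : Finset W}
    {U : Finset J} (hTU : ∀ p ∈ M, p.1 ∈ T → p.2 ∈ U) : #(M.filter (·.1 ∈ T)) ≤ min #T #U := by
  have hM' := hM.subset (filter_subset (·.1 ∈ T) M)
  refine le_min (hM'.card_le_of_fst_mem fun p hp => (mem_filter.1 hp).2)
    (hM'.card_le_of_snd_mem fun p hp => hTU p (mem_filter.1 hp).1 (mem_filter.1 hp).2)

lemma IsMatching.card_le_min_add_min [DecidableEq W] [DecidableEq J] (hM : IsMatching C M)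
    {WA WB : Finset W} {UA UB : Finset J} (hW : Disjoint WA WB)
    (hC : ∀ w j, C w j = true → (w ∈ WA ∧ j ∈ UA) ∨ (w ∈ WB ∧ j ∈ UB)) :
    #M ≤ min #WA #UA + min #WB #UB := by
  have hcover : M ⊆ M.filter (·.1 ∈ WA) ∪ M.filter (·.1 ∈ WB) := fun p hp => by
    rcases hC p.1 p.2 (hM.1 p hp) with ⟨h, -⟩ | ⟨h, -⟩ <;> simp [hp, h]
  have hA := hM.card_filter_le_min (T := WA) (U := UA) fun p hp hpA => by
    rcases hC p.1 p.2 (hM.1 p hp) with ⟨-, h⟩ | ⟨h, -⟩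
    exacts [h, absurd h (disjoint_left.1 hW hpA)]
  have hB := hM.card_filter_le_min (T := WB) (U := UB) fun p hp hpB => by
    rcases hC p.1 p.2 (hM.1 p hp) with ⟨h, -⟩ | ⟨-, h⟩
    exacts [absurd hpB (disjoint_left.1 hW h), h]
  calc #M ≤ #(M.filter (·.1 ∈ WA) ∪ M.filter (·.1 ∈ WB)) := card_le_card hcover
    _ ≤ _ := card_union_le _ _
    _ ≤ _ := add_le_add hA hB

end Matching

/-- With eligibility-only compatibility `C⁻`, the greedy procedure that
processes `W^A` workers first (each taking a `J^A` job if available, else a `J^{AB}` job)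
and then `W^B` workers (each taking a `J^{AB}` job if available, else a `J^B` job)
produces a matching of maximum cardinality among all feasible matchings. -/
theorem stmt0
    (WA WB JA JAB JB : Finset ℕ)
    (hW : Disjoint WA WB)
    (hJ1 : Disjoint JA JAB) (hJ2 : Disjoint JA JB) (hJ3 : Disjoint JAB JB)
    (C : ℕ → ℕ → Bool)
    (hC : ∀ w j, C w j = true ↔
      ((w ∈ WA ∧ (j ∈ JA ∨ j ∈ JAB)) ∨ (w ∈ WB ∧ (j ∈ JAB ∨ j ∈ JB))))
    (orderA orderB : List ℕ)
    (hoA : Enum orderA WA) (hoB : Enum orderB WB)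
    (pref : ℕ → List ℕ)
    (hprefA : ∀ w ∈ WA, ∃ l1 l2, pref w = l1 ++ l2 ∧ Enum l1 JA ∧ Enum l2 JAB)
    (hprefB : ∀ w ∈ WB, ∃ l1 l2, pref w = l1 ++ l2 ∧ Enum l1 JAB ∧ Enum l2 JB)
    (M : Finset (ℕ × ℕ)) (hM : IsMatching C M) :
    M.card ≤ (greedy C (orderA ++ orderB) pref (JA ∪ JAB ∪ JB)).length := by
  have hcompat : ∀ w j, C w j = true → (w ∈ WA ∧ j ∈ JA ∪ JAB) ∨ (w ∈ WB ∧ j ∈ JAB ∪ JB) :=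
    fun w j h => by simpa only [mem_union] using (hC w j).1 h
  have hbound := hM.card_le_min_add_min hW hcompat
  have hjobs : #M ≤ #(JA ∪ JAB ∪ JB) := hM.card_le_of_snd_mem fun p hp => by
    rcases (hC p.1 p.2).1 (hM.1 p hp) with ⟨-, h | h⟩ | ⟨-, h | h⟩ <;> simp [h]
  have htierA : ∀ w ∈ orderA, TieredPref C pref JA JAB w := fun w hw =>
    ⟨hprefA w (hoA.mem_iff.1 hw), fun j hj => (hC w j).2 (.inl ⟨hoA.mem_iff.1 hw, mem_union.1 hj⟩)⟩
  have htierB : ∀ w ∈ orderB, TieredPref C pref JAB JB w := fun w hw =>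
    ⟨hprefB w (hoB.mem_iff.1 hw), fun j hj => (hC w j).2 (.inr ⟨hoB.mem_iff.1 hw, mem_union.1 hj⟩)⟩
  have hAJB : ∀ w ∈ orderA, ∀ j ∈ JB, C w j = false := fun w hw j hj =>
    Bool.eq_false_iff.2 fun h => by
      rcases hcompat w j h with ⟨-, hj'⟩ | ⟨hwB, -⟩
      · exact (mem_union.1 hj').elim (disjoint_right.1 hJ2 hj) (disjoint_right.1 hJ3 hj)
      · exact disjoint_left.1 hW (hoA.mem_iff.1 hw) hwB
  rw [card_union_of_disjoint (disjoint_union_left.2 ⟨hJ2, hJ3⟩), card_union_of_disjoint hJ1]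
    at hjobs
  rw [card_union_of_disjoint hJ1, card_union_of_disjoint hJ3, ← hoA.length_eq,
    ← hoB.length_eq] at hbound
  rw [length_greedy_append_of_tieredPref hJ1 hJ3 htierA htierB hAJB]
  omega
end

section
/- For every n ≥ 1 there exists a market with three regions X, Y, Z in which all workers and jobs have the same degree category: n workers from region X, n workers from region Y, n jobs from region Z, n−1 jobs from region X, and 1 job from region Y, where a worker is compatible with a job iff their regions differ; a greedy sequential procedure that processes all Y-workers first (each taking a Z-job), then X-workers (first the one taking the Y-job), leaves n−1 workers and n−1 jobs unmatched, while a feasible matching exists that matches all 2n workers to all 2n jobs. -/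
/-!
Processing the `n` Y-workers first, each takes a Z-job, which exhausts the Z-jobs. The first
X-worker then takes the only Y-job, and the remaining `n - 1` X-workers find nothing but X-jobs.
On the other hand, with X-workers `0, …, n-1`, Y-workers `n, …, 2n-1`, Z-jobs `0, …, n-1`,
X-jobs `n, …, 2n-2` and the Y-job `2n-1`, the cyclic shift `w ↦ w - 1 (mod 2n)` assigns every
worker a job of another region.
-/

section Greedy

variable {W J : Type} [DecidableEq J]

theorem greedyStep_eq_self {C : W → J → Bool} {pref : W → List J} {L : List (W × J)}
    {S : Finset J} {w : W} (h : ∀ j ∈ pref w, j ∈ S → C w j = false) :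
    greedyStep C pref (L, S) w = (L, S) := by
  have hnone : (pref w).find? (fun j => C w j && decide (j ∈ S)) = none := by
    rw [List.find?_eq_none]
    intro j hj
    by_cases hS : j ∈ S <;> simp_all
  simp only [greedyStep, hnone]

theorem foldl_greedyStep_eq_self {C : W → J → Bool} {pref : W → List J} {L : List (W × J)}
    {S : Finset J} {ws : List W} (h : ∀ w ∈ ws, ∀ j ∈ pref w, j ∈ S → C w j = false) :
    ws.foldl (greedyStep C pref) (L, S) = (L, S) := by
  induction ws with
  | nil => rfl
  | cons w ws ih =>
    rw [List.foldl_cons, greedyStep_eq_self (h w List.mem_cons_self),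
      ih fun v hv => h v (List.mem_cons_of_mem w hv)]

theorem greedyStep_range_eq_of_minimal {C : W → ℕ → Bool} {m : ℕ} {L : List (W × ℕ)}
    {S : Finset ℕ} {w : W} {k : ℕ} (hk : k < m) (hkS : k ∈ S) (hC : C w k = true)
    (hmin : ∀ j < k, j ∈ S → C w j = false) :
    greedyStep C (fun _ => List.range m) (L, S) w = (L ++ [(w, k)], S.erase k) := by
  have hfind : (List.range m).find? (fun j => C w j && decide (j ∈ S)) = some k :=
    List.find?_range_eq_some.2 ⟨by simp [hC, hkS], List.mem_range.2 hk, fun j hj => by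
      by_cases hjS : j ∈ S <;> simp_all⟩
  simp only [greedyStep, hfind]

theorem isMatching_image_graph [DecidableEq W] {C : W → J → Bool} {s : Finset W} {f : W → J}
    (hC : ∀ w ∈ s, C w (f w) = true) (hf : Set.InjOn f s) :
    IsMatching C (s.image fun w => (w, f w)) := by
  simp only [IsMatching, Finset.mem_image, forall_exists_index, and_imp]
  refine ⟨?_, ?_, ?_⟩
  · rintro _ w hw rfl
    exact hC w hw
  · rintro _ v - rfl _ w - rfl rfl
    rfl
  · rintro _ v hv rfl _ w hw rfl h
    rw [hf hv hw h]

theorem enum_range (n : ℕ) : Enum (List.range n) (Finset.range n) :=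
  ⟨List.nodup_range, List.toFinset_range n⟩

theorem enum_range' (a b : ℕ) : Enum (List.range' a b) (Finset.Ico a (a + b)) :=
  ⟨List.nodup_range', List.toFinset_range'_1 a b⟩

theorem enum_singleton {α : Type} [DecidableEq α] (a : α) : Enum [a] {a} :=
  ⟨List.nodup_singleton a, by simp⟩

end Greedy

namespace ShiftMarket

/-- Numbering the jobs Z, then X, then Y makes `List.range (2 * n)` the common priority list. -/
def jobRegion (n j : ℕ) : Fin 3 := if j < n then 2 else if j < 2 * n - 1 then 0 else 1

def workerRegion (n w : ℕ) : Fin 3 := if w < n then 0 else 1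

def compat (n w j : ℕ) : Bool :=
  decide (w ∈ Finset.range (2 * n) ∧ j ∈ Finset.range (2 * n) ∧
    workerRegion n w ≠ jobRegion n j)

def order (n : ℕ) : List ℕ := List.range' n n ++ List.range n

def shift (n w : ℕ) : ℕ := if w = 0 then 2 * n - 1 else w - 1

variable {n : ℕ}

theorem workerRegion_of_lt {w : ℕ} (h : w < n) : workerRegion n w = 0 := if_pos h

theorem workerRegion_of_le {w : ℕ} (h : n ≤ w) : workerRegion n w = 1 := if_neg (by omega)

theorem jobRegion_of_lt {j : ℕ} (h : j < n) : jobRegion n j = 2 := if_pos h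

theorem jobRegion_of_mem_Ico {j : ℕ} (h : j ∈ Finset.Ico n (2 * n - 1)) :
    jobRegion n j = 0 := by
  rw [Finset.mem_Ico] at h
  rw [jobRegion, if_neg (by omega), if_pos h.2]

theorem jobRegion_two_mul_sub_one (hn : 1 ≤ n) : jobRegion n (2 * n - 1) = 1 := by
  rw [jobRegion, if_neg (by omega), if_neg (by omega)]

theorem compat_of_ne {w j : ℕ} (hw : w < 2 * n) (hj : j < 2 * n)
    (h : workerRegion n w ≠ jobRegion n j) : compat n w j = true :=
  decide_eq_true ⟨Finset.mem_range.2 hw, Finset.mem_range.2 hj, h⟩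

theorem compat_of_eq {w j : ℕ} (h : workerRegion n w = jobRegion n j) : compat n w j = false :=
  decide_eq_false fun hc => hc.2.2 h

theorem filter_workerRegion_eq_zero :
    (Finset.range (2 * n)).filter (fun w => workerRegion n w = 0) = Finset.range n := by
  ext w
  rw [Finset.mem_filter]
  simp only [Finset.mem_range, workerRegion]
  split_ifs <;> simp <;> omega

theorem filter_workerRegion_eq_one :
    (Finset.range (2 * n)).filter (fun w => workerRegion n w = 1) = Finset.Ico n (n + n) := by
  ext w
  rw [Finset.mem_filter]
  simp only [Finset.mem_range, Finset.mem_Ico, workerRegion]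
  split_ifs <;> simp <;> omega

theorem filter_jobRegion_eq_two :
    (Finset.range (2 * n)).filter (fun j => jobRegion n j = 2) = Finset.range n := by
  ext j
  rw [Finset.mem_filter]
  simp only [Finset.mem_range, jobRegion]
  split_ifs <;> simp <;> omega

theorem filter_jobRegion_eq_zero :
    (Finset.range (2 * n)).filter (fun j => jobRegion n j = 0) = Finset.Ico n (n + (n - 1)) := by
  ext j
  rw [Finset.mem_filter]
  simp only [Finset.mem_range, Finset.mem_Ico, jobRegion]
  split_ifs <;> simp <;> omega

theorem filter_jobRegion_eq_one (hn : 1 ≤ n) :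
    (Finset.range (2 * n)).filter (fun j => jobRegion n j = 1) = {2 * n - 1} := by
  ext j
  rw [Finset.mem_filter]
  simp only [Finset.mem_range, Finset.mem_singleton, jobRegion]
  split_ifs <;> simp <;> omega

theorem range_two_mul_eq (hn : 1 ≤ n) :
    List.range (2 * n) = List.range n ++ List.range' n (n - 1) ++ [2 * n - 1] := by
  rw [show 2 * n = n + (n - 1) + 1 by omega, List.range_succ, List.range_eq_range',
    List.range_eq_range', ← List.range'_append]
  simp

theorem foldl_greedyStep_yWorkers (k m : ℕ) (hkm : k + m = n) (L : List (ℕ × ℕ)) :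
    (List.range' (n + k) m).foldl (greedyStep (compat n) fun _ => List.range (2 * n))
      (L, Finset.Ico k (2 * n))
      = (L ++ (List.range' k m).map fun i => (n + i, i), Finset.Ico n (2 * n)) := by
  induction m generalizing k L with
  | zero => simp [show k = n by omega]
  | succ m ih =>
    have hstep := greedyStep_range_eq_of_minimal (C := compat n) (L := L)
      (S := Finset.Ico k (2 * n)) (w := n + k) (k := k) (m := 2 * n) (by omega)
      (Finset.mem_Ico.2 ⟨le_rfl, by omega⟩)
      (compat_of_ne (by omega) (by omega)
        (by rw [workerRegion_of_le (by omega), jobRegion_of_lt (by omega)]; decide))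
      (fun j hj hjS => absurd (Finset.mem_Ico.1 hjS).1 (by omega))
    rw [List.range'_succ, List.foldl_cons, hstep, ← Nat.Ico_succ_left_eq_erase_Ico,
      Nat.succ_eq_add_one, add_assoc, ih (k + 1) (by omega)]
    simp [List.range'_succ]

theorem greedy_eq (hn : 1 ≤ n) :
    greedy (compat n) (order n) (fun _ => List.range (2 * n)) (Finset.range (2 * n))
      = (List.range' 0 n).map (fun i => (n + i, i)) ++ [(0, 2 * n - 1)] := by
  set L := (List.range' 0 n).map fun i => (n + i, i)
  have hYphase := foldl_greedyStep_yWorkers (n := n) 0 n (by omega) []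
  rw [add_zero, ← Finset.range_eq_Ico, List.nil_append] at hYphase
  have hXworkers : List.range n = 0 :: List.range' 1 (n - 1) := by
    rw [List.range_eq_range', List.range'_eq_cons_iff]
    exact ⟨rfl, hn, rfl⟩
  have hYjob : greedyStep (compat n) (fun _ => List.range (2 * n)) (L, Finset.Ico n (2 * n)) 0
      = (L ++ [(0, 2 * n - 1)], Finset.Ico n (2 * n - 1)) := by
    rw [greedyStep_range_eq_of_minimal (k := 2 * n - 1) (by omega)
      (Finset.mem_Ico.2 ⟨by omega, by omega⟩)
      (compat_of_ne (by omega) (by omega)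
        (by rw [workerRegion_of_lt hn, jobRegion_two_mul_sub_one hn]; decide))
      (fun j hj hjS => compat_of_eq (by
        rw [workerRegion_of_lt hn,
          jobRegion_of_mem_Ico (Finset.mem_Ico.2 ⟨(Finset.mem_Ico.1 hjS).1, hj⟩)]))]
    congr 1
    ext j
    simp only [Finset.mem_erase, Finset.mem_Ico]
    omega
  have hStuck := foldl_greedyStep_eq_self (C := compat n) (pref := fun _ => List.range (2 * n))
    (L := L ++ [(0, 2 * n - 1)]) (ws := List.range' 1 (n - 1))
    fun w hw j _ hj => compat_of_eq (by
      rw [workerRegion_of_lt (by have := List.mem_range'_1.1 hw; omega), jobRegion_of_mem_Ico hj])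
  rw [greedy, order, List.foldl_append, hYphase, hXworkers, List.foldl_cons, hYjob, hStuck]

theorem shift_lt {w : ℕ} (hw : w < 2 * n) : shift n w < 2 * n := by
  unfold shift
  split_ifs <;> omega

theorem injOn_shift : Set.InjOn (shift n) (Finset.range (2 * n)) := by
  intro a ha b hb h
  simp only [Finset.coe_range, Set.mem_Iio] at ha hb
  unfold shift at h
  split_ifs at h <;> omega

theorem workerRegion_ne_jobRegion_shift {w : ℕ} (hw : w < 2 * n) :
    workerRegion n w ≠ jobRegion n (shift n w) := by
  unfold workerRegion jobRegion shift
  split_ifs <;> first | decide | omega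

theorem exists_perfect_matching :
    ∃ M : Finset (ℕ × ℕ), IsMatching (compat n) M ∧ M.card = 2 * n ∧
      (∀ w ∈ Finset.range (2 * n), ∃ j, (w, j) ∈ M) ∧
      (∀ j ∈ Finset.range (2 * n), ∃ w, (w, j) ∈ M) := by
  refine ⟨(Finset.range (2 * n)).image fun w => (w, shift n w), isMatching_image_graph
    (fun w hw => compat_of_ne (Finset.mem_range.1 hw) (shift_lt (Finset.mem_range.1 hw))
      (workerRegion_ne_jobRegion_shift (Finset.mem_range.1 hw))) injOn_shift, ?_,
    fun w hw => ⟨_, Finset.mem_image_of_mem _ hw⟩, fun j hj => ?_⟩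
  · rw [Finset.card_image_of_injective _ fun a b h => congrArg Prod.fst h, Finset.card_range]
  · obtain ⟨w, hw, rfl⟩ := Finset.surjOn_of_injOn_of_card_le (shift n)
      (fun w hw => Finset.mem_range.2 (shift_lt (Finset.mem_range.1 hw))) injOn_shift le_rfl hj
    exact ⟨w, Finset.mem_image_of_mem _ hw⟩

end ShiftMarket

open ShiftMarket

/-- For every `n ≥ 1` there is a three-region market (regions `0 = X`, `1 = Y`,
`2 = Z`) with `n` X-workers, `n` Y-workers, `n` Z-jobs, `n-1` X-jobs and one Y-job
(compatibility: regions differ) on which the greedy procedure — Y-workers processed first,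
everyone ranking Z-jobs before X-jobs before Y-jobs — matches only `n + 1` of the `2n`
workers (leaving `n - 1` workers and `n - 1` jobs unmatched), while some feasible matching
matches all `2n` workers to all `2n` jobs. -/
theorem stmt2 (n : ℕ) (hn : 1 ≤ n) :
    ∃ (workers jobs : Finset ℕ) (rw rj : ℕ → Fin 3) (C : ℕ → ℕ → Bool)
      (order : List ℕ) (pref : ℕ → List ℕ),
      (workers.filter fun w => rw w = 0).card = n ∧
      (workers.filter fun w => rw w = 1).card = n ∧
      workers.card = 2 * n ∧
      (jobs.filter fun j => rj j = 2).card = n ∧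
      (jobs.filter fun j => rj j = 0).card = n - 1 ∧
      (jobs.filter fun j => rj j = 1).card = 1 ∧
      jobs.card = 2 * n ∧
      (∀ w j, C w j = true ↔ (w ∈ workers ∧ j ∈ jobs ∧ rw w ≠ rj j)) ∧
      (∃ oY oX, order = oY ++ oX ∧
        Enum oY (workers.filter fun w => rw w = 1) ∧
        Enum oX (workers.filter fun w => rw w = 0)) ∧
      (∀ w ∈ workers, ∃ lZ lX lY, pref w = lZ ++ lX ++ lY ∧
        Enum lZ (jobs.filter fun j => rj j = 2) ∧
        Enum lX (jobs.filter fun j => rj j = 0) ∧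
        Enum lY (jobs.filter fun j => rj j = 1)) ∧
      (greedy C order pref jobs).length = 2 * n - (n - 1) ∧
      (∃ M : Finset (ℕ × ℕ), IsMatching C M ∧ M.card = 2 * n ∧
        (∀ w ∈ workers, ∃ j, (w, j) ∈ M) ∧ (∀ j ∈ jobs, ∃ w, (w, j) ∈ M)) := by
  refine ⟨Finset.range (2 * n), Finset.range (2 * n), workerRegion n, jobRegion n, compat n,
    order n, fun _ => List.range (2 * n), ?_, ?_, Finset.card_range _, ?_, ?_, ?_,
    Finset.card_range _, fun _ _ => decide_eq_true_iff, ?_, ?_, ?_, exists_perfect_matching⟩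
  · rw [filter_workerRegion_eq_zero, Finset.card_range]
  · rw [filter_workerRegion_eq_one, Nat.card_Ico, Nat.add_sub_cancel_left]
  · rw [filter_jobRegion_eq_two, Finset.card_range]
  · rw [filter_jobRegion_eq_zero, Nat.card_Ico, Nat.add_sub_cancel_left]
  · rw [filter_jobRegion_eq_one hn, Finset.card_singleton]
  · refine ⟨_, _, rfl, ?_, ?_⟩
    · rw [filter_workerRegion_eq_one]; exact enum_range' n n
    · rw [filter_workerRegion_eq_zero]; exact enum_range n
  · refine fun _ _ => ⟨_, _, _, range_two_mul_eq hn, ?_, ?_, ?_⟩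
    · rw [filter_jobRegion_eq_two]; exact enum_range n
    · rw [filter_jobRegion_eq_zero]; exact enum_range' n (n - 1)
    · rw [filter_jobRegion_eq_one hn]; exact enum_singleton _
  · rw [greedy_eq hn, List.length_append, List.length_map, List.length_range']
    simp only [List.length_singleton]
    omega
end

section
/- Consider a partitioned (Qing-style) greedy procedure on a single tube containing a set J of jobs and a set W of workers all eligible for these jobs, with compatibility given by a rule of avoidance (worker w compatible with job j iff region(w) ≠ region(j)). Let W^P = {w ∈ W : some job in J is incompatible with w} and W^{NP} = W \ W^P. For any assignment plan (order over workers and per-worker orders over jobs), let μ^{Q1} be the matching produced by processing all workers in a single tube and μ^{Q2} the matching produced by first processing all workers in W^P and then all in W^{NP} (using the same relative orders). Then |μ^{Q2}| ≥ |μ^{Q1}|. -/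
theorem List.find?_eq_some_of_imp {α : Type*} {l : List α} {p q : α → Bool}
    (hqp : ∀ a, q a = true → p a = true) {a : α} (hp : l.find? p = some a) (hq : q a = true) :
    l.find? q = some a := by
  obtain ⟨-, as, bs, rfl, has⟩ := List.find?_eq_some_iff_append.mp hp
  refine List.find?_eq_some_iff_append.mpr ⟨hq, as, bs, rfl, fun x hx => ?_⟩
  have := has x hx
  cases h : q x <;> simp_all

section Greedy

variable {W J : Type} [DecidableEq J] (C : W → J → Bool) (pref : W → List J)

local notation "step" => greedyStep C pref

theorem greedyStep_of_find?_eq_none {st : List (W × J) × Finset J} {w : W}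
    (h : (pref w).find? (fun j => C w j && decide (j ∈ st.2)) = none) :
    step st w = st := by
  unfold greedyStep; rw [h]

theorem greedyStep_of_find?_eq_some {st : List (W × J) × Finset J} {w : W} {j : J}
    (h : (pref w).find? (fun j => C w j && decide (j ∈ st.2)) = some j) :
    step st w = (st.1 ++ [(w, j)], st.2.erase j) := by
  unfold greedyStep; rw [h]

theorem compatible_and_mem_of_find?_eq_some {S : Finset J} {w : W} {j : J}
    (h : (pref w).find? (fun j => C w j && decide (j ∈ S)) = some j) : C w j = true ∧ j ∈ S := by
  simpa using List.find?_some h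

theorem greedyStep_eq_self_or (st : List (W × J) × Finset J) (w : W) :
    step st w = st ∨ ∃ j ∈ st.2, step st w = (st.1 ++ [(w, j)], st.2.erase j) := by
  cases h : (pref w).find? (fun j => C w j && decide (j ∈ st.2)) with
  | none => exact Or.inl (greedyStep_of_find?_eq_none C pref h)
  | some j =>
    exact Or.inr ⟨j, (compatible_and_mem_of_find?_eq_some C pref h).2,
      greedyStep_of_find?_eq_some C pref h⟩

theorem greedyStep_snd_subset (st : List (W × J) × Finset J) (w : W) :
    (step st w).2 ⊆ st.2 := by
  rcases greedyStep_eq_self_or C pref st w with h | ⟨j, -, h⟩ <;> rw [h]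
  exact Finset.erase_subset j st.2

theorem card_le_card_greedyStep_snd_add_one (st : List (W × J) × Finset J) (w : W) :
    st.2.card ≤ (step st w).2.card + 1 := by
  rcases greedyStep_eq_self_or C pref st w with h | ⟨j, hj, h⟩ <;> rw [h]
  · omega
  · exact (Finset.card_erase_add_one hj).ge

theorem length_add_card_greedyStep (st : List (W × J) × Finset J) (w : W) :
    (step st w).1.length + (step st w).2.card = st.1.length + st.2.card := by
  rcases greedyStep_eq_self_or C pref st w with h | ⟨j, hj, h⟩ <;> rw [h]
  dsimp only
  rw [List.length_append, List.length_singleton, ← Finset.card_erase_add_one hj]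
  omega

theorem greedyStep_snd_mono {A B : List (W × J) × Finset J} (hBA : B.2 ⊆ A.2) (w : W) :
    (step B w).2 ⊆ (step A w).2 ∧
      (step A w).2.card + B.2.card ≤ A.2.card + (step B w).2.card := by
  set pA := fun j => C w j && decide (j ∈ A.2)
  set pB := fun j => C w j && decide (j ∈ B.2)
  have hpBA : ∀ j, pB j = true → pA j = true := by
    simp only [pA, pB, Bool.and_eq_true, decide_eq_true_eq]
    exact fun j h => ⟨h.1, hBA h.2⟩
  cases hA : (pref w).find? pA with
  | none =>
    have hB : (pref w).find? pB = none := List.find?_eq_none.mpr fun j hj hpB => by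
      simpa [hpBA j hpB] using List.find?_eq_none.mp hA j hj
    rw [greedyStep_of_find?_eq_none C pref hA, greedyStep_of_find?_eq_none C pref hB]
    exact ⟨hBA, by omega⟩
  | some jA =>
    -- the first available job of `A` is also the first of `B` as soon as it lies in `B`
    have hjA : jA ∈ B.2 → (pref w).find? pB = some jA := fun h =>
      List.find?_eq_some_of_imp hpBA hA
        (by simp [pB, h, (compatible_and_mem_of_find?_eq_some C pref hA).1])
    have hjA_mem : jA ∈ A.2 := (compatible_and_mem_of_find?_eq_some C pref hA).2
    rw [greedyStep_of_find?_eq_some C pref hA]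
    dsimp only
    have hcardA := Finset.card_erase_add_one hjA_mem
    cases hB : (pref w).find? pB with
    | none =>
      rw [greedyStep_of_find?_eq_none C pref hB]
      refine ⟨fun x hx => Finset.mem_erase.mpr ⟨?_, hBA hx⟩, by omega⟩
      rintro rfl
      simp [hjA hx] at hB
    | some jB =>
      rw [greedyStep_of_find?_eq_some C pref hB]
      dsimp only
      have hjB_mem : jB ∈ B.2 := (compatible_and_mem_of_find?_eq_some C pref hB).2
      have hcardB := Finset.card_erase_add_one hjB_mem
      refine ⟨fun x hx => ?_, by omega⟩
      obtain ⟨hxjB, hxB⟩ := Finset.mem_erase.mp hx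
      refine Finset.mem_erase.mpr ⟨?_, hBA hxB⟩
      rintro rfl
      exact hxjB (Option.some.inj ((hjA hxB).symm.trans hB))

theorem card_greedyStep_snd_of_forall {st : List (W × J) × Finset J} {w : W}
    (h : ∀ j ∈ st.2, C w j = true ∧ j ∈ pref w) :
    (step st w).2.card = st.2.card - 1 := by
  rcases st.2.eq_empty_or_nonempty with he | ⟨j, hj⟩
  · have := greedyStep_snd_subset C pref st w
    rw [he, Finset.subset_empty] at this
    rw [this, he, Finset.card_empty]
  · obtain ⟨j', hj'⟩ := Option.isSome_iff_exists.mp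
      ((List.find?_isSome (p := fun j => C w j && decide (j ∈ st.2))).mpr
        ⟨j, (h j hj).2, by simp [(h j hj).1, hj]⟩)
    rw [greedyStep_of_find?_eq_some C pref hj']
    exact Finset.card_erase_of_mem (compatible_and_mem_of_find?_eq_some C pref hj').2

theorem foldl_greedyStep_snd_subset (l : List W) (st : List (W × J) × Finset J) :
    (l.foldl step st).2 ⊆ st.2 := by
  induction l generalizing st with
  | nil => exact Finset.Subset.refl _
  | cons w l ih => exact (ih _).trans (greedyStep_snd_subset C pref st w)

theorem length_add_card_foldl_greedyStep (l : List W) (st : List (W × J) × Finset J) :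
    (l.foldl step st).1.length + (l.foldl step st).2.card = st.1.length + st.2.card := by
  induction l generalizing st with
  | nil => rfl
  | cons w l ih => rw [List.foldl_cons, ih, length_add_card_greedyStep]

theorem length_greedy_add_card (order : List W) (jobs : Finset J) :
    (greedy C order pref jobs).length + (order.foldl step ([], jobs)).2.card = jobs.card := by
  simpa [greedy] using length_add_card_foldl_greedyStep C pref order ([], jobs)

theorem card_foldl_greedyStep_snd_of_forall {l : List W} {st : List (W × J) × Finset J}
    (h : ∀ w ∈ l, ∀ j ∈ st.2, C w j = true ∧ j ∈ pref w) :
    (l.foldl step st).2.card = st.2.card - l.length := by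
  induction l generalizing st with
  | nil => rfl
  | cons w l ih =>
    rw [List.foldl_cons, List.length_cons,
      ih fun v hv j hj => h v (List.mem_cons_of_mem w hv) j (greedyStep_snd_subset C pref st w hj),
      card_greedyStep_snd_of_forall C pref (h w List.mem_cons_self)]
    omega

theorem foldl_greedyStep_snd_of_sublist {l₁ l₂ : List W} (hl : l₁.Sublist l₂)
    {A B : List (W × J) × Finset J} (hBA : B.2 ⊆ A.2) :
    (l₂.foldl step B).2 ⊆ (l₁.foldl step A).2 ∧
      (l₁.foldl step A).2.card + B.2.card + l₁.length ≤
        (l₂.foldl step B).2.card + A.2.card + l₂.length := by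
  induction hl generalizing A B with
  | slnil => exact ⟨hBA, by simp only [List.foldl_nil, List.length_nil]; omega⟩
  | cons w _ ih =>
    obtain ⟨hsub, hcard⟩ := ih ((greedyStep_snd_subset C pref B w).trans hBA)
    have := card_le_card_greedyStep_snd_add_one C pref B w
    exact ⟨hsub, by simp only [List.foldl_cons, List.length_cons]; omega⟩
  | cons_cons w _ ih =>
    obtain ⟨hstep_sub, hstep_card⟩ := greedyStep_snd_mono C pref hBA w
    obtain ⟨hsub, hcard⟩ := ih hstep_sub
    exact ⟨hsub, by simp only [List.foldl_cons, List.length_cons]; omega⟩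

end Greedy

/-- Single tube of jobs `J` with avoidance compatibility. Let
`W^P` be the workers incompatible with some job and `W^{NP}` the rest. For any assignment
plan, the matching produced when the prioritized workers `W^P` are processed first (keeping
relative orders) is at least as large as the one produced by the unprioritized single-tube
run: `|μ^{Q2}| ≥ |μ^{Q1}|`. -/
theorem stmt6 (workers jobs : Finset ℕ) (rw rj : ℕ → ℕ)
    (C : ℕ → ℕ → Bool) (hC : ∀ w j, C w j = true ↔ rw w ≠ rj j)
    (order : List ℕ) (ho : Enum order workers)
    (pref : ℕ → List ℕ) (hpref : ∀ w ∈ workers, Enum (pref w) jobs)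
    (WP : Finset ℕ) (hWP : WP = workers.filter fun w => ∃ j ∈ jobs, rw w = rj j) :
    (greedy C order pref jobs).length ≤
      (greedy C
        (order.filter (fun w => decide (w ∈ WP)) ++
         order.filter (fun w => decide (w ∉ WP)))
        pref jobs).length := by
  obtain ⟨-, hcmp⟩ := foldl_greedyStep_snd_of_sublist C pref
    (List.filter_sublist (p := fun w => decide (w ∈ WP)) (l := order))
    (Finset.Subset.refl (([], jobs) : List (ℕ × ℕ) × Finset ℕ).2)
  have hlen := List.length_eq_length_filter_add (l := order) (fun w => decide (w ∈ WP))
  simp only [decide_not] at hlen ⊢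
  have hQ1 := length_greedy_add_card C pref order jobs
  set lP := order.filter (fun w => decide (w ∈ WP))
  set lNP := order.filter (fun w => !decide (w ∈ WP))
  have hQ2 := length_greedy_add_card C pref (lP ++ lNP) jobs
  set stP := lP.foldl (greedyStep C pref) ([], jobs)
  have hNP : ∀ w ∈ lNP, ∀ j ∈ stP.2, C w j = true ∧ j ∈ pref w := by
    intro w hw j hj
    obtain ⟨hwo, hwP⟩ : w ∈ order ∧ w ∉ WP := by simpa [lNP] using hw
    have hww : w ∈ workers := ho.2 ▸ List.mem_toFinset.mpr hwo
    have hjj : j ∈ jobs := foldl_greedyStep_snd_subset C pref lP _ hj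
    refine ⟨(hC w j).mpr fun h => hwP ?_, List.mem_toFinset.mp ((hpref w hww).2 ▸ hjj)⟩
    rw [hWP]
    exact Finset.mem_filter.mpr ⟨hww, j, hjj, h⟩
  rw [List.foldl_append, card_foldl_greedyStep_snd_of_forall C pref hNP] at hQ2
  omega
end

section
/- Berge's lemma for bipartite worker-job matchings: a matching M in a bipartite graph (workers vs. jobs, edges given by compatibility) has maximum cardinality if and only if there is no augmenting path with respect to M, i.e., no path of odd length whose endpoints are both unmatched vertices and whose edges alternate between edges outside M and edges inside M. -/
section BergeDefs

variable {W J : Type}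

/-- A matching inside the edge set `E` of a bipartite worker–job graph:
a set of edges no two of which share an endpoint. -/
def IsMatchingIn (E M : Finset (W × J)) : Prop :=
  M ⊆ E ∧
  (∀ p ∈ M, ∀ q ∈ M, p.1 = q.1 → p = q) ∧
  (∀ p ∈ M, ∀ q ∈ M, p.2 = q.2 → p = q)

/-- An `M`-augmenting path in the bipartite graph with edge set `E`:
a path `w₀ - j₀ - w₁ - j₁ - ⋯ - w_m - j_m` of odd length whose endpoints `w₀`, `j_m` are
both `M`-unmatched, whose odd edges `(wᵢ, jᵢ)` lie in `E \ M` and whose even edges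
`(wᵢ₊₁, jᵢ)` lie in `M` (so edges alternate: not in `M`, in `M`, …, not in `M`). -/
structure AugPath (E M : Finset (W × J)) where
  m : ℕ
  ws : Fin (m + 1) → W
  js : Fin (m + 1) → J
  inj_ws : Function.Injective ws
  inj_js : Function.Injective js
  edge : ∀ i, (ws i, js i) ∈ E ∧ (ws i, js i) ∉ M
  medge : ∀ i : Fin m, (ws i.succ, js i.castSucc) ∈ M
  start_unmatched : ∀ j, (ws 0, j) ∉ M
  end_unmatched : ∀ w, (w, js (Fin.last m)) ∉ M

end BergeDefs

/-!
If `P` is an `M`-augmenting path, exchanging the matching and the non-matching edges of `P`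
in `M` gives a matching with one more edge.

Conversely, let `M'` be a matching with `#M < #M'`, and let `A`, `A'` be the sets of workers
matched by `M`, `M'`. Send a worker `w` to the worker matched by `M` with the job matched to
`w` by `M'`; this partial map is injective. Starting from any worker in `A' \ A`, iterate it
until it stops. The orbit either stops at a worker whose `M'`-job is `M`-free, and then it
traces an augmenting path, or it stops at a worker in `A \ A'`. Orbits from distinct starting
points are disjoint, so if there is no augmenting path then `#(A' \ A) ≤ #(A \ A')`, that
is `#M' ≤ #M`.
-/

open Finset

section PartialOrbit

variable {α : Type*} (step : α → Option α)

def partialOrbit (a : α) : ℕ → Option α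
  | 0 => some a
  | n + 1 => (partialOrbit a n).bind step

variable {step}

theorem partialOrbit_succ (a : α) (n : ℕ) :
    partialOrbit step a (n + 1) = (partialOrbit step a n).bind step := rfl

theorem isSome_partialOrbit_of_le {a : α} {m n : ℕ} (hmn : m ≤ n)
    (hn : (partialOrbit step a n).isSome) : (partialOrbit step a m).isSome := by
  induction hmn with
  | refl => exact hn
  | step _ ih => exact ih (Option.isSome_of_isSome_bind hn)

theorem partialOrbit_eq_some_of_ne_zero {a x : α} {n : ℕ} (hn : n ≠ 0)
    (hx : partialOrbit step a n = some x) : ∃ y, step y = some x := by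
  obtain ⟨n, rfl⟩ := Nat.exists_eq_succ_of_ne_zero hn
  obtain ⟨y, -, hy⟩ := Option.bind_eq_some_iff.mp hx
  exact ⟨y, hy⟩

theorem partialOrbit_inj (hinj : ∀ ⦃x y z : α⦄, step x = some z → step y = some z → x = y)
    {a b x : α} {m n : ℕ} (ha : ∀ y, step y ≠ some a)
    (hb : ∀ y, step y ≠ some b) (hax : partialOrbit step a m = some x)
    (hbx : partialOrbit step b n = some x) : m = n ∧ a = b := by
  induction m generalizing n x with
  | zero =>
    cases n with
    | zero => exact ⟨rfl, (Option.some.inj hax).trans (Option.some.inj hbx).symm⟩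
    | succ n =>
      obtain ⟨y, hy⟩ := partialOrbit_eq_some_of_ne_zero n.succ_ne_zero hbx
      exact absurd (Option.some.inj hax ▸ hy) (ha y)
  | succ m ih =>
    obtain ⟨y, hay, hyx⟩ := Option.bind_eq_some_iff.mp hax
    cases n with
    | zero => exact absurd (Option.some.inj hbx ▸ hyx) (hb y)
    | succ n =>
      obtain ⟨z, hbz, hzx⟩ := Option.bind_eq_some_iff.mp hbx
      obtain ⟨rfl, rfl⟩ := ih hay (hinj hzx hyx ▸ hbz)
      exact ⟨rfl, rfl⟩

theorem exists_partialOrbit_eq_some_step_eq_none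
    (hinj : ∀ ⦃x y z : α⦄, step x = some z → step y = some z → x = y) {a : α}
    (ha : ∀ y, step y ≠ some a) (s : Finset α) (hs : ∀ x y, step x = some y → y ∈ s) :
    ∃ n x, partialOrbit step a n = some x ∧ step x = none := by
  by_contra! hstep
  have hsome : ∀ n, (partialOrbit step a n).isSome := by
    intro n
    induction n with
    | zero => rfl
    | succ n ih =>
      obtain ⟨x, hx⟩ := Option.isSome_iff_exists.mp ih
      rw [partialOrbit_succ, hx, Option.bind_some]
      exact Option.ne_none_iff_isSome.mp (hstep n x hx)
  set v : ℕ → α := fun n => (partialOrbit step a n).get (hsome n)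
  have hv : ∀ n, partialOrbit step a n = some (v n) := fun n => (Option.some_get _).symm
  have hv_inj : Function.Injective v := fun m n hmn =>
    (partialOrbit_inj hinj ha ha (hv m) (hmn ▸ hv n)).1
  have hv_mem : ∀ n, v n ∈ (insert a s : Set α) := by
    rintro (_ | n)
    · exact Set.mem_insert a _
    · obtain ⟨y, hy⟩ := partialOrbit_eq_some_of_ne_zero n.succ_ne_zero (hv (n + 1))
      exact Set.mem_insert_of_mem a (hs y _ hy)
  exact Set.infinite_of_injective_forall_mem hv_inj hv_mem (Set.toFinite _)

theorem card_le_card_of_forall_partialOrbit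
    (hinj : ∀ ⦃x y z : α⦄, step x = some z → step y = some z → x = y) {S T : Finset α}
    (hS : ∀ a ∈ S, ∀ y, step y ≠ some a)
    (hST : ∀ a ∈ S, ∃ n, ∃ x ∈ T, partialOrbit step a n = some x) : #S ≤ #T := by
  choose! n x hxT hx using hST
  refine card_le_card_of_injOn x hxT fun a ha b hb hab => ?_
  exact (partialOrbit_inj hinj (hS a ha) (hS b hb) (hx a ha) (hab ▸ hx b hb)).2

end PartialOrbit

open Classical in
noncomputable def choosePartner {α β : Type*} (R : α → β → Prop) (a : α) : Option β :=
  if h : ∃ b, R a b then some h.choose else none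

theorem choosePartner_eq_some {α β : Type*} {R : α → β → Prop}
    (hR : ∀ a b b', R a b → R a b' → b = b') {a : α} {b : β} :
    choosePartner R a = some b ↔ R a b := by
  unfold choosePartner
  split_ifs with h
  · exact ⟨fun hb => Option.some.inj hb ▸ h.choose_spec,
      fun hb => congrArg some (hR a _ _ h.choose_spec hb)⟩
  · exact ⟨nofun, fun hb => h ⟨b, hb⟩⟩

theorem choosePartner_eq_none {α β : Type*} {R : α → β → Prop} {a : α} :
    choosePartner R a = none ↔ ∀ b, ¬R a b := by
  unfold choosePartner
  split_ifs with h <;> simpa using h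

section Matching

variable {W J : Type} {E M M' : Finset (W × J)}

theorem isMatchingIn_iff : IsMatchingIn E M ↔
    M ⊆ E ∧ Set.InjOn Prod.fst (M : Set (W × J)) ∧ Set.InjOn Prod.snd (M : Set (W × J)) :=
  Iff.rfl

theorem IsMatchingIn.injOn_fst (hM : IsMatchingIn E M) : Set.InjOn Prod.fst (M : Set (W × J)) :=
  (isMatchingIn_iff.mp hM).2.1

theorem IsMatchingIn.injOn_snd (hM : IsMatchingIn E M) : Set.InjOn Prod.snd (M : Set (W × J)) :=
  (isMatchingIn_iff.mp hM).2.2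

theorem IsMatchingIn.card_image_fst [DecidableEq W] (hM : IsMatchingIn E M) :
    #(M.image Prod.fst) = #M :=
  card_image_of_injOn hM.injOn_fst

theorem IsMatchingIn.eq_of_mem_of_mem_left (hM : IsMatchingIn E M) {w : W} {j j' : J}
    (h : (w, j) ∈ M) (h' : (w, j') ∈ M) : j = j' :=
  congrArg Prod.snd (hM.injOn_fst h h' rfl)

theorem IsMatchingIn.eq_of_mem_of_mem_right (hM : IsMatchingIn E M) {w w' : W} {j : J}
    (h : (w, j) ∈ M) (h' : (w', j) ∈ M) : w = w' :=
  congrArg Prod.fst (hM.injOn_snd h h' rfl)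

noncomputable def alternatingStep (M M' : Finset (W × J)) : W → Option W :=
  choosePartner fun w w' => ∃ j, (w, j) ∈ M' ∧ (w', j) ∈ M

theorem alternatingStep_eq_some (hM : IsMatchingIn E M) (hM' : IsMatchingIn E M') {w w' : W} :
    alternatingStep M M' w = some w' ↔ ∃ j, (w, j) ∈ M' ∧ (w', j) ∈ M := by
  refine choosePartner_eq_some fun w w₁ w₂ ⟨j₁, hwj₁, hj₁⟩ ⟨j₂, hwj₂, hj₂⟩ => ?_
  obtain rfl := hM'.eq_of_mem_of_mem_left hwj₁ hwj₂
  exact hM.eq_of_mem_of_mem_right hj₁ hj₂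

theorem alternatingStep_inj (hM : IsMatchingIn E M) (hM' : IsMatchingIn E M') ⦃x y z : W⦄
    (hx : alternatingStep M M' x = some z) (hy : alternatingStep M M' y = some z) : x = y := by
  obtain ⟨j₁, hxj₁, hj₁⟩ := (alternatingStep_eq_some hM hM').mp hx
  obtain ⟨j₂, hyj₂, hj₂⟩ := (alternatingStep_eq_some hM hM').mp hy
  obtain rfl := hM.eq_of_mem_of_mem_left hj₁ hj₂
  exact hM'.eq_of_mem_of_mem_right hxj₁ hyj₂

theorem nonempty_augPath_of_partialOrbit (hM : IsMatchingIn E M) (hM' : IsMatchingIn E M')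
    {w₀ x : W} {j : J} {k : ℕ} (hw₀ : ∀ j, (w₀, j) ∉ M)
    (hx : partialOrbit (alternatingStep M M') w₀ k = some x) (hxj : (x, j) ∈ M')
    (hj : ∀ w, (w, j) ∉ M) : Nonempty (AugPath E M) := by
  have hw₀_src : ∀ y, alternatingStep M M' y ≠ some w₀ := fun y hy =>
    let ⟨j', _, hj'⟩ := (alternatingStep_eq_some hM hM').mp hy
    hw₀ j' hj'
  have hdef : ∀ i : Fin (k + 1), ∃ w, partialOrbit (alternatingStep M M') w₀ i = some w :=
    fun i => Option.isSome_iff_exists.mp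
      (isSome_partialOrbit_of_le (Fin.is_le i) (by rw [hx]; rfl))
  choose ws hws using hdef
  have hws_zero : ws 0 = w₀ := Option.some.inj (hws 0).symm
  have hws_last : ws (Fin.last k) = x := Option.some.inj ((hws _).symm.trans hx)
  have hws_succ : ∀ i : Fin k, ∃ j, (ws i.castSucc, j) ∈ M' ∧ (ws i.succ, j) ∈ M := by
    intro i
    have h := hws i.succ
    rw [Fin.val_succ, partialOrbit_succ, ← Fin.val_castSucc, hws i.castSucc,
      Option.bind_some] at h
    exact (alternatingStep_eq_some hM hM').mp h
  have hpartner : ∀ i : Fin (k + 1), ∃ j, (ws i, j) ∈ M' := by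
    intro i
    induction i using Fin.lastCases with
    | last => exact ⟨j, hws_last ▸ hxj⟩
    | cast i => exact (hws_succ i).imp fun _ => And.left
  choose js hjs using hpartner
  have hws_inj : Function.Injective ws := fun a b hab => Fin.ext
    (partialOrbit_inj (alternatingStep_inj hM hM') hw₀_src hw₀_src (hws a) (hab ▸ hws b)).1
  have hjs_inj : Function.Injective js := fun a b hab =>
    hws_inj (hM'.eq_of_mem_of_mem_right (hjs a) (hab ▸ hjs b))
  have hmedge : ∀ i : Fin k, (ws i.succ, js i.castSucc) ∈ M := by
    intro i
    obtain ⟨j', hj', hj'M⟩ := hws_succ i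
    rwa [hM'.eq_of_mem_of_mem_left (hjs i.castSucc) hj']
  refine ⟨⟨k, ws, js, hws_inj, hjs_inj, fun i => ⟨hM'.1 (hjs i), fun hi => ?_⟩, hmedge,
    hws_zero ▸ hw₀, ?_⟩⟩
  · induction i using Fin.cases with
    | zero => exact hw₀ _ (hws_zero ▸ hi)
    | succ i =>
      exact Fin.castSucc_lt_succ.ne (hjs_inj (hM.eq_of_mem_of_mem_left (hmedge i) hi))
  · have hlast := hjs (Fin.last k)
    rw [hws_last] at hlast
    rw [← hM'.eq_of_mem_of_mem_left hxj hlast]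
    exact hj

theorem nonempty_augPath_of_card_lt (hM : IsMatchingIn E M) (hM' : IsMatchingIn E M')
    (hcard : #M < #M') : Nonempty (AugPath E M) := by
  classical
  by_contra hnone
  set A := M.image Prod.fst
  set A' := M'.image Prod.fst
  have hstep_mem : ∀ y x, alternatingStep M M' y = some x → x ∈ A := fun y x h =>
    let ⟨j, _, hxj⟩ := (alternatingStep_eq_some hM hM').mp h
    mem_image_of_mem Prod.fst hxj
  have hsrc : ∀ w ∈ A' \ A, ∀ y, alternatingStep M M' y ≠ some w := fun w hw y h =>
    (mem_sdiff.mp hw).2 (hstep_mem y w h)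
  have hreach : ∀ w₀ ∈ A' \ A,
      ∃ n, ∃ x ∈ A \ A', partialOrbit (alternatingStep M M') w₀ n = some x := by
    intro w₀ hw₀
    obtain ⟨n, x, hx, hstop⟩ := exists_partialOrbit_eq_some_step_eq_none
      (alternatingStep_inj hM hM') (hsrc w₀ hw₀) A hstep_mem
    have hxA' : x ∉ A' := by
      rintro hxA'
      obtain ⟨⟨x, j⟩, hxj, rfl⟩ := mem_image.mp hxA'
      refine hnone (nonempty_augPath_of_partialOrbit hM hM' (w₀ := w₀) ?_ hx hxj ?_)
      · exact fun j' h => (mem_sdiff.mp hw₀).2 (mem_image_of_mem Prod.fst h)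
      · exact fun w hwj => choosePartner_eq_none.mp hstop w ⟨j, hxj, hwj⟩
    have hn : n ≠ 0 := by
      rintro rfl
      exact hxA' (Option.some.inj hx ▸ (mem_sdiff.mp hw₀).1)
    obtain ⟨y, hy⟩ := partialOrbit_eq_some_of_ne_zero hn hx
    exact ⟨n, x, mem_sdiff.mpr ⟨hstep_mem y x hy, hxA'⟩, hx⟩
  have hsdiff : #(A' \ A) ≤ #(A \ A') :=
    card_le_card_of_forall_partialOrbit (alternatingStep_inj hM hM') hsrc hreach
  rw [card_sdiff_le_card_sdiff_iff, hM.card_image_fst, hM'.card_image_fst] at hsdiff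
  exact hsdiff.not_gt hcard

end Matching

namespace AugPath

variable {W J : Type} [DecidableEq W] [DecidableEq J] {E M : Finset (W × J)} (P : AugPath E M)

def nonMatchingEdges : Finset (W × J) :=
  univ.image fun i => (P.ws i, P.js i)

def matchingEdges : Finset (W × J) :=
  univ.image fun i : Fin P.m => (P.ws i.succ, P.js i.castSucc)

def augment : Finset (W × J) :=
  M \ P.matchingEdges ∪ P.nonMatchingEdges

theorem card_nonMatchingEdges : #P.nonMatchingEdges = P.m + 1 := by
  rw [nonMatchingEdges, card_image_of_injective _ fun i i' h => P.inj_ws (Prod.ext_iff.mp h).1,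
    card_univ, Fintype.card_fin]

theorem card_matchingEdges : #P.matchingEdges = P.m := by
  rw [matchingEdges, card_image_of_injective _
      fun i i' h => Fin.succ_injective _ (P.inj_ws (Prod.ext_iff.mp h).1),
    card_univ, Fintype.card_fin]

theorem matchingEdges_subset : P.matchingEdges ⊆ M := by
  simpa [matchingEdges, subset_iff] using P.medge

theorem disjoint_nonMatchingEdges : Disjoint M P.nonMatchingEdges := by
  simpa [nonMatchingEdges, disjoint_right] using fun i => (P.edge i).2

theorem card_augment : #P.augment = #M + 1 := by
  rw [augment, card_union_of_disjoint (P.disjoint_nonMatchingEdges.mono_left sdiff_subset),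
    card_sdiff_of_subset P.matchingEdges_subset, card_nonMatchingEdges, card_matchingEdges]
  have hm : P.m ≤ #M := P.card_matchingEdges ▸ card_le_card P.matchingEdges_subset
  omega

theorem fst_ne_of_mem_nonMatchingEdges (hM : IsMatchingIn E M) {a b : W × J}
    (ha : a ∈ M \ P.matchingEdges) (hb : b ∈ P.nonMatchingEdges) : a.1 ≠ b.1 := by
  obtain ⟨haM, haK⟩ := mem_sdiff.mp ha
  obtain ⟨i, -, rfl⟩ := mem_image.mp hb
  intro h
  induction i using Fin.cases with
  | zero =>
    rw [show a = (P.ws 0, a.2) from Prod.ext h rfl] at haM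
    exact P.start_unmatched a.2 haM
  | succ i =>
    exact haK (mem_image.mpr ⟨i, mem_univ _, hM.injOn_fst (P.medge i) haM h.symm⟩)

theorem snd_ne_of_mem_nonMatchingEdges (hM : IsMatchingIn E M) {a b : W × J}
    (ha : a ∈ M \ P.matchingEdges) (hb : b ∈ P.nonMatchingEdges) : a.2 ≠ b.2 := by
  obtain ⟨haM, haK⟩ := mem_sdiff.mp ha
  obtain ⟨i, -, rfl⟩ := mem_image.mp hb
  intro h
  induction i using Fin.lastCases with
  | last =>
    rw [show a = (a.1, P.js (Fin.last P.m)) from Prod.ext rfl h] at haM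
    exact P.end_unmatched a.1 haM
  | cast i =>
    exact haK (mem_image.mpr ⟨i, mem_univ _, hM.injOn_snd (P.medge i) haM h.symm⟩)

theorem isMatchingIn_augment (hM : IsMatchingIn E M) : IsMatchingIn E P.augment := by
  have hdisj : Disjoint (↑(M \ P.matchingEdges) : Set (W × J)) ↑P.nonMatchingEdges :=
    disjoint_coe.mpr (P.disjoint_nonMatchingEdges.mono_left sdiff_subset)
  have hsub : (↑(M \ P.matchingEdges) : Set (W × J)) ⊆ ↑M := coe_subset.mpr sdiff_subset
  rw [isMatchingIn_iff, augment, coe_union, Set.injOn_union hdisj, Set.injOn_union hdisj]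
  refine ⟨union_subset (sdiff_subset.trans hM.1) ?_,
    ⟨hM.injOn_fst.mono hsub, ?_, fun a ha b hb => P.fst_ne_of_mem_nonMatchingEdges hM ha hb⟩,
    ⟨hM.injOn_snd.mono hsub, ?_, fun a ha b hb => P.snd_ne_of_mem_nonMatchingEdges hM ha hb⟩⟩
  · simpa [nonMatchingEdges, subset_iff] using fun i => (P.edge i).1
  · rw [nonMatchingEdges, coe_image, coe_univ, Set.image_univ]
    exact Function.Injective.injOn_range (g := Prod.fst) P.inj_ws
  · rw [nonMatchingEdges, coe_image, coe_univ, Set.image_univ]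
    exact Function.Injective.injOn_range (g := Prod.snd) P.inj_js

end AugPath

/-- Berge's lemma for bipartite worker–job matchings: a matching `M` in the
bipartite graph with edge set `E` has maximum cardinality if and only if there is no
`M`-augmenting path. -/
theorem stmt13 {W J : Type} (E M : Finset (W × J)) (hM : IsMatchingIn E M) :
    (∀ M' : Finset (W × J), IsMatchingIn E M' → M'.card ≤ M.card) ↔
      IsEmpty (AugPath E M) := by
  classical
  constructor
  · refine fun hmax => ⟨fun P => ?_⟩
    have := hmax P.augment (P.isMatchingIn_augment hM)
    rw [P.card_augment] at this
    omega
  · intro hempty M' hM'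
    by_contra! hcard
    exact hempty.false (nonempty_augPath_of_card_lt hM hM' hcard).some
end

section
/- In the two-tube procedure on a regionally-sufficient market, if the produced matching leaves some worker in W_1 unmatched and all jobs in J_{−1} are matched to workers of W_1, then any alternating path (with respect to the produced matching) starting from an unmatched worker in W_1 visits only vertices in W_1 ∪ J_{−1}; in particular no augmenting path connects an unmatched worker in W_1 to an unmatched job in J_1, so by Berge's lemma the matching has maximum cardinality. -/
/-!
Every edge at a `W₁` worker leads to `J₋₁`, and every `J₋₁` job is matched back into `W₁`,
so an alternating path from an unmatched `W₁` worker never leaves `W₁ ∪ J₋₁`; its last job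
lies in `J₋₁` and is therefore matched, so the path cannot be augmenting.
For maximality we count directly: in any matching, edges into `J₁` start in `W₋₁` and the
remaining edges end in `J₋₁`, so it has at most `|W₋₁| + |J₋₁|` edges, and `M` attains this
bound since it covers `W₋₁` (through `J₁`) and `J₋₁`.
-/

open Finset

namespace IsMatchingIn

variable {W J : Type} {E M : Finset (W × J)}

lemma injOn_fst_s14 (hM : IsMatchingIn E M) : Set.InjOn Prod.fst (M : Set (W × J)) :=
  fun p hp q hq => hM.2.1 p hp q hq

lemma injOn_snd_s14 (hM : IsMatchingIn E M) : Set.InjOn Prod.snd (M : Set (W × J)) :=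
  fun p hp q hq => hM.2.2 p hp q hq

lemma card_filter_le_of_fst_mem (hM : IsMatchingIn E M) {P : W × J → Prop} [DecidablePred P]
    {S : Finset W} (h : ∀ p ∈ M, P p → p.1 ∈ S) : #(M.filter P) ≤ #S :=
  card_le_card_of_injOn Prod.fst (fun p hp => h p (mem_filter.1 hp).1 (mem_filter.1 hp).2)
    (hM.injOn_fst_s14.mono (coe_subset.2 (filter_subset _ _)))

lemma card_filter_le_of_snd_mem (hM : IsMatchingIn E M) {P : W × J → Prop} [DecidablePred P]
    {T : Finset J} (h : ∀ p ∈ M, P p → p.2 ∈ T) : #(M.filter P) ≤ #T :=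
  card_le_card_of_injOn Prod.snd (fun p hp => h p (mem_filter.1 hp).1 (mem_filter.1 hp).2)
    (hM.injOn_snd_s14.mono (coe_subset.2 (filter_subset _ _)))

lemma fst_mem_of_snd_mem {S : Finset W} {T : Finset J} (hM : IsMatchingIn E M)
    (hT : ∀ j ∈ T, ∃ w ∈ S, (w, j) ∈ M) {w : W} {j : J} (hj : j ∈ T) (hwj : (w, j) ∈ M) :
    w ∈ S := by
  obtain ⟨w', hw', hw'j⟩ := hT j hj
  have hw : w = w' := congrArg Prod.fst (hM.injOn_snd_s14 hwj hw'j rfl)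
  exact hw ▸ hw'

end IsMatchingIn

section TwoTube

variable {W J : Type} [DecidableEq W] [DecidableEq J]
  {W1 Wm1 : Finset W} {J1 Jm1 : Finset J} {E M : Finset (W × J)}

lemma snd_mem_Jm1_of_fst_mem_W1 (hE : ∀ p ∈ E, p.1 ∈ W1 ∪ Wm1 ∧ p.2 ∈ J1 ∪ Jm1)
    (hadj2 : ∀ w ∈ W1, ∀ j ∈ J1, (w, j) ∉ E) {w : W} {j : J} (hw : w ∈ W1) (hwj : (w, j) ∈ E) :
    j ∈ Jm1 :=
  (mem_union.1 (hE _ hwj).2).resolve_left fun hj => hadj2 w hw j hj hwj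

lemma AugPath.ws_mem (hE : ∀ p ∈ E, p.1 ∈ W1 ∪ Wm1 ∧ p.2 ∈ J1 ∪ Jm1)
    (hadj2 : ∀ w ∈ W1, ∀ j ∈ J1, (w, j) ∉ E) (hM : IsMatchingIn E M)
    (hJm1 : ∀ j ∈ Jm1, ∃ w ∈ W1, (w, j) ∈ M) (hWm1 : ∀ w ∈ Wm1, ∃ j, (w, j) ∈ M)
    (P : AugPath E M) (i : Fin (P.m + 1)) : P.ws i ∈ W1 := by
  induction i using Fin.induction with
  | zero =>
    refine (mem_union.1 (hE _ (P.edge 0).1).1).resolve_right fun h => ?_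
    obtain ⟨j, hj⟩ := hWm1 _ h
    exact P.start_unmatched j hj
  | succ i ih =>
    exact hM.fst_mem_of_snd_mem hJm1
      (snd_mem_Jm1_of_fst_mem_W1 hE hadj2 ih (P.edge i.castSucc).1) (P.medge i)

lemma isEmpty_augPath (hE : ∀ p ∈ E, p.1 ∈ W1 ∪ Wm1 ∧ p.2 ∈ J1 ∪ Jm1)
    (hadj2 : ∀ w ∈ W1, ∀ j ∈ J1, (w, j) ∉ E) (hM : IsMatchingIn E M)
    (hJm1 : ∀ j ∈ Jm1, ∃ w ∈ W1, (w, j) ∈ M) (hWm1 : ∀ w ∈ Wm1, ∃ j, (w, j) ∈ M) :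
    IsEmpty (AugPath E M) := by
  refine ⟨fun P => ?_⟩
  have hlast : P.js (Fin.last P.m) ∈ Jm1 :=
    snd_mem_Jm1_of_fst_mem_W1 hE hadj2 (P.ws_mem hE hadj2 hM hJm1 hWm1 _) (P.edge _).1
  obtain ⟨w, -, hw⟩ := hJm1 _ hlast
  exact P.end_unmatched w hw

lemma card_le_of_isMatchingIn (hE : ∀ p ∈ E, p.1 ∈ W1 ∪ Wm1 ∧ p.2 ∈ J1 ∪ Jm1)
    (hadj2 : ∀ w ∈ W1, ∀ j ∈ J1, (w, j) ∉ E) {N : Finset (W × J)} (hN : IsMatchingIn E N) :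
    #N ≤ #Wm1 + #Jm1 := by
  rw [← card_filter_add_card_filter_not (s := N) (fun p => p.2 ∈ J1)]
  gcongr
  · refine hN.card_filter_le_of_fst_mem fun p hp hpJ => ?_
    exact (mem_union.1 (hE p (hN.1 hp)).1).resolve_left fun hpW => hadj2 _ hpW _ hpJ (hN.1 hp)
  · exact hN.card_filter_le_of_snd_mem fun p hp hpJ => (mem_union.1 (hE p (hN.1 hp)).2).resolve_left hpJ

lemma card_add_card_le_card (hWd : Disjoint W1 Wm1) (hJd : Disjoint J1 Jm1)
    (hE : ∀ p ∈ E, p.1 ∈ W1 ∪ Wm1 ∧ p.2 ∈ J1 ∪ Jm1) (hM : IsMatchingIn E M)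
    (hJm1 : ∀ j ∈ Jm1, ∃ w ∈ W1, (w, j) ∈ M) (hWm1 : ∀ w ∈ Wm1, ∃ j, (w, j) ∈ M) :
    #Wm1 + #Jm1 ≤ #M := by
  rw [← card_filter_add_card_filter_not (s := M) (fun p => p.2 ∈ J1)]
  gcongr
  · refine card_le_card_of_surjOn Prod.fst fun w hw => ?_
    obtain ⟨j, hwj⟩ := hWm1 w hw
    have hj : j ∈ J1 := (mem_union.1 (hE _ (hM.1 hwj)).2).resolve_right fun hj =>
      disjoint_left.1 hWd (hM.fst_mem_of_snd_mem hJm1 hj hwj) hw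
    exact ⟨(w, j), mem_filter.2 ⟨hwj, hj⟩, rfl⟩
  · refine card_le_card_of_surjOn Prod.snd fun j hj => ?_
    obtain ⟨w, -, hwj⟩ := hJm1 j hj
    exact ⟨(w, j), mem_filter.2 ⟨hwj, disjoint_right.1 hJd hj⟩, rfl⟩

end TwoTube

theorem stmt14_general {W J : Type} [DecidableEq W] [DecidableEq J]
    (W1 Wm1 : Finset W) (J1 Jm1 : Finset J) (E M : Finset (W × J))
    (hWd : Disjoint W1 Wm1) (hJd : Disjoint J1 Jm1)
    (hE : ∀ p ∈ E, p.1 ∈ W1 ∪ Wm1 ∧ p.2 ∈ J1 ∪ Jm1)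
    (hadj2 : ∀ w ∈ W1, ∀ j ∈ J1, (w, j) ∉ E)
    (hM : IsMatchingIn E M)
    (hJm1 : ∀ j ∈ Jm1, ∃ w ∈ W1, (w, j) ∈ M)
    (hWm1 : ∀ w ∈ Wm1, ∃ j, (w, j) ∈ M) :
    IsEmpty (AugPath E M) ∧
      ∀ M' : Finset (W × J), IsMatchingIn E M' → M'.card ≤ M.card :=
  ⟨isEmpty_augPath hE hadj2 hM hJm1 hWm1, fun _ hM' =>
    (card_le_of_isMatchingIn hE hadj2 hM').trans
      (card_add_card_le_card hWd hJd hE hM hJm1 hWm1)⟩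

/-- Bipartite structure of the two-tube procedure: workers `W₁ ∪ W₋₁`, jobs
`J₁ ∪ J₋₁`; every `W₁` worker is adjacent to every `J₋₁` job and to no `J₁` job, and every
`W₋₁` worker is adjacent to every `J₁` job. If in a matching `M` every `J₋₁` job is matched
to a `W₁` worker, every `W₋₁` worker is matched, and some `W₁` worker and some `J₁` job are
unmatched, then there is no `M`-augmenting path (any alternating path from an unmatched `W₁`
worker stays inside `W₁ ∪ J₋₁`), and hence by Berge's lemma `M` has maximum cardinality. -/
theorem stmt14 {W J : Type} [DecidableEq W] [DecidableEq J]
    (W1 Wm1 : Finset W) (J1 Jm1 : Finset J) (E M : Finset (W × J))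
    (hWd : Disjoint W1 Wm1) (hJd : Disjoint J1 Jm1)
    (hE : ∀ p ∈ E, p.1 ∈ W1 ∪ Wm1 ∧ p.2 ∈ J1 ∪ Jm1)
    (hadj1 : ∀ w ∈ W1, ∀ j ∈ Jm1, (w, j) ∈ E)
    (hadj2 : ∀ w ∈ W1, ∀ j ∈ J1, (w, j) ∉ E)
    (hadj3 : ∀ w ∈ Wm1, ∀ j ∈ J1, (w, j) ∈ E)
    (hM : IsMatchingIn E M)
    (hJm1 : ∀ j ∈ Jm1, ∃ w ∈ W1, (w, j) ∈ M)
    (hWm1 : ∀ w ∈ Wm1, ∃ j, (w, j) ∈ M)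
    (hw : ∃ w ∈ W1, ∀ j, (w, j) ∉ M)
    (hj : ∃ j ∈ J1, ∀ w, (w, j) ∉ M) :
    IsEmpty (AugPath E M) ∧
      ∀ M' : Finset (W × J), IsMatchingIn E M' → M'.card ≤ M.card :=
  stmt14_general W1 Wm1 J1 Jm1 E M hWd hJd hE hadj2 hM hJm1 hWm1
end

section
/- In a market with only eligibility constraints where each Qing sequence of tubes pairs a worker set with an equally-sized set of jobs all mutually compatible with those workers (|W^A_1| = |J^A|, |W^B_1| = |J^B|, |W^A_2 ∪ W^B_2| = |J^{AB}|), the greedy procedure run on each tube matches every worker to a job, and the resulting overall matching both minimizes unfilled jobs and prioritizes high-levels. -/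
/-- Number of workers from `S` matched under `M`. -/
def matchedWorkers (S : Finset ℕ) (M : Finset (ℕ × ℕ)) : ℕ :=
  (M.filter fun p => p.1 ∈ S).card

/-- Number of jobs from `S` matched under `M` (i.e. `|μ(S)|`). -/
def matchedJobs (S : Finset ℕ) (M : Finset (ℕ × ℕ)) : ℕ :=
  (M.filter fun p => p.2 ∈ S).card


/-!
Inside each tube every worker is compatible with every job, both sides have the same size
and every worker ranks all the tube's jobs, so the greedy run never gets stuck: it matches the
tube's workers bijectively onto its jobs. Hence `μ` matches every worker and every job of
`J^A ∪ J^{AB} ∪ J^B`. A feasible matching uses each worker and each job at most once, so its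
size, its number of matched `W^A` workers and its numbers of matched `J^A` and `J^{AB}` jobs
are bounded by the sizes of the corresponding sets, and `μ` attains all four bounds.
-/

section Greedy

variable {W J : Type} [DecidableEq J] (C : W → J → Bool) (pref : W → List J)

theorem exists_greedyStep_eq_of_mem {w : W} {j₀ : J} {avail : Finset J} (acc : List (W × J))
    (hj₀ : j₀ ∈ avail) (hC : C w j₀ = true) (hpref : j₀ ∈ pref w) :
    ∃ j ∈ avail, greedyStep C pref (acc, avail) w = (acc ++ [(w, j)], avail.erase j) := by
  have hsome : ((pref w).find? (fun j => C w j && decide (j ∈ avail))).isSome :=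
    List.find?_isSome.mpr ⟨j₀, hpref, by simp [hj₀, hC]⟩
  obtain ⟨j, hfind⟩ := Option.isSome_iff_exists.mp hsome
  have hj : C w j = true ∧ j ∈ avail := by simpa using List.find?_some hfind
  exact ⟨j, hj.2, by simp only [greedyStep, hfind]⟩

theorem foldl_greedyStep_of_compatible (order : List W) (avail : Finset J)
    (acc : List (W × J)) (hC : ∀ w ∈ order, ∀ j ∈ avail, C w j = true)
    (hpref : ∀ w ∈ order, ∀ j ∈ avail, j ∈ pref w) (hlen : order.length ≤ avail.card) :
    ∃ ps : List (W × J), (order.foldl (greedyStep C pref) (acc, avail)).1 = acc ++ ps ∧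
      ps.map Prod.fst = order ∧ (ps.map Prod.snd).Nodup ∧ ∀ p ∈ ps, p.2 ∈ avail := by
  induction order generalizing avail acc with
  | nil => exact ⟨[], by simp, rfl, by simp, by simp⟩
  | cons w rest ih =>
    obtain ⟨j₀, hj₀⟩ := Finset.card_pos.mp (lt_of_lt_of_le (Nat.succ_pos _) hlen)
    obtain ⟨j, hj, hstep⟩ := exists_greedyStep_eq_of_mem C pref acc hj₀
      (hC w List.mem_cons_self j₀ hj₀) (hpref w List.mem_cons_self j₀ hj₀)
    obtain ⟨ps, hfold, hfst, hnodup, hmem⟩ := ih (avail.erase j) (acc ++ [(w, j)])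
      (fun w' hw' j' hj' => hC w' (List.mem_cons_of_mem _ hw') j' (Finset.mem_of_mem_erase hj'))
      (fun w' hw' j' hj' => hpref w' (List.mem_cons_of_mem _ hw') j' (Finset.mem_of_mem_erase hj'))
      (by rw [Finset.card_erase_of_mem hj]; simp only [List.length_cons] at hlen; omega)
    refine ⟨(w, j) :: ps, by simp [hstep, hfold], by simp [hfst], ?_, ?_⟩
    · refine List.nodup_cons.mpr ⟨fun hj' => ?_, hnodup⟩
      obtain ⟨p, hp, rfl⟩ := List.mem_map.mp hj'
      exact Finset.notMem_erase _ _ (hmem p hp)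
    · intro p hp
      rcases List.mem_cons.mp hp with rfl | hp
      exacts [hj, Finset.mem_of_mem_erase (hmem p hp)]

theorem greedy_image_eq [DecidableEq W] {order : List W} {S : Finset W} {T : Finset J}
    (horder : Enum order S) (hpref : ∀ w ∈ S, Enum (pref w) T)
    (hC : ∀ w ∈ S, ∀ j ∈ T, C w j = true) (hcard : S.card = T.card) :
    (greedy C order pref T).toFinset.image Prod.fst = S ∧
      (greedy C order pref T).toFinset.image Prod.snd = T := by
  have hS : ∀ w ∈ order, w ∈ S := fun w hw => horder.2 ▸ List.mem_toFinset.mpr hw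
  have hlen : order.length = T.card := by
    rw [← hcard, ← horder.2, List.toFinset_card_of_nodup horder.1]
  obtain ⟨ps, hfold, hfst, hnodup, hmem⟩ := foldl_greedyStep_of_compatible C pref order T []
    (fun w hw => hC w (hS w hw))
    (fun w hw j hj => List.mem_toFinset.mp ((hpref w (hS w hw)).2 ▸ hj)) hlen.le
  have hgreedy : greedy C order pref T = ps := by simpa [greedy] using hfold
  have himage : ∀ {β : Type} [DecidableEq β] (f : W × J → β),
      ps.toFinset.image f = (ps.map f).toFinset := fun f => by ext; simp
  rw [hgreedy, himage, himage, hfst, horder.2]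
  refine ⟨rfl, Finset.eq_of_subset_of_card_le (fun j hj => ?_) ?_⟩
  · obtain ⟨p, hp, rfl⟩ := List.mem_map.mp (List.mem_toFinset.mp hj)
    exact hmem p hp
  · rw [List.toFinset_card_of_nodup hnodup, List.length_map, ← hlen, ← hfst, List.length_map]

end Greedy

section Matching

variable {W J : Type} {C : W → J → Bool} {M N : Finset (W × J)}

theorem IsMatching.card_le_of_snd_mem_image [DecidableEq J] (hM : IsMatching C M)
    (h : ∀ p ∈ M, p.2 ∈ N.image Prod.snd) : M.card ≤ N.card :=
  (Finset.card_le_card_of_injOn Prod.snd h fun p hp q hq => hM.2.2 p hp q hq).trans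
    Finset.card_image_le

theorem IsMatching.card_filter_fst_le (hM : IsMatching C M) (S : Finset W)
    [DecidablePred fun p : W × J => p.1 ∈ S] : (M.filter fun p => p.1 ∈ S).card ≤ S.card :=
  Finset.card_le_card_of_injOn Prod.fst (fun _ hp => (Finset.mem_filter.mp hp).2)
    fun p hp q hq => hM.2.1 p (Finset.mem_filter.mp hp).1 q (Finset.mem_filter.mp hq).1

theorem IsMatching.card_filter_snd_le (hM : IsMatching C M) (T : Finset J)
    [DecidablePred fun p : W × J => p.2 ∈ T] : (M.filter fun p => p.2 ∈ T).card ≤ T.card :=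
  Finset.card_le_card_of_injOn Prod.snd (fun _ hp => (Finset.mem_filter.mp hp).2)
    fun p hp q hq => hM.2.2 p (Finset.mem_filter.mp hp).1 q (Finset.mem_filter.mp hq).1

theorem card_le_card_filter_fst [DecidableEq W] {S : Finset W} (hS : S ⊆ N.image Prod.fst)
    [DecidablePred fun p : W × J => p.1 ∈ S] : S.card ≤ (N.filter fun p => p.1 ∈ S).card :=
  Finset.card_le_card_of_surjOn Prod.fst fun w hw => by
    obtain ⟨p, hp, rfl⟩ := Finset.mem_image.mp (hS hw)
    exact ⟨p, Finset.mem_filter.mpr ⟨hp, hw⟩, rfl⟩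

theorem card_le_card_filter_snd [DecidableEq J] {T : Finset J} (hT : T ⊆ N.image Prod.snd)
    [DecidablePred fun p : W × J => p.2 ∈ T] : T.card ≤ (N.filter fun p => p.2 ∈ T).card :=
  Finset.card_le_card_of_surjOn Prod.snd fun j hj => by
    obtain ⟨p, hp, rfl⟩ := Finset.mem_image.mp (hT hj)
    exact ⟨p, Finset.mem_filter.mpr ⟨hp, hj⟩, rfl⟩

end Matching

theorem matchedWorkers_le_of_subset_image {C : ℕ → ℕ → Bool} {M N : Finset (ℕ × ℕ)}
    (hM : IsMatching C M) {S : Finset ℕ} (hS : S ⊆ N.image Prod.fst) :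
    matchedWorkers S M ≤ matchedWorkers S N :=
  (hM.card_filter_fst_le S).trans (card_le_card_filter_fst hS)

theorem matchedJobs_le_of_subset_image {C : ℕ → ℕ → Bool} {M N : Finset (ℕ × ℕ)}
    (hM : IsMatching C M) {T : Finset ℕ} (hT : T ⊆ N.image Prod.snd) :
    matchedJobs T M ≤ matchedJobs T N :=
  (hM.card_filter_snd_le T).trans (card_le_card_filter_snd hT)

theorem stmt16_general
    (WA1 WA2 WB1 WB2 JA JAB JB : Finset ℕ)
    (hc1 : WA1.card = JA.card) (hc2 : WB1.card = JB.card)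
    (hc3 : (WA2 ∪ WB2).card = JAB.card)
    (C : ℕ → ℕ → Bool)
    (hC : ∀ w j, C w j = true ↔
      ((w ∈ WA1 ∪ WA2 ∧ (j ∈ JA ∨ j ∈ JAB)) ∨ (w ∈ WB1 ∪ WB2 ∧ (j ∈ JAB ∨ j ∈ JB))))
    (o1 o2 o3 : List ℕ)
    (ho1 : Enum o1 WA1) (ho2 : Enum o2 (WA2 ∪ WB2)) (ho3 : Enum o3 WB1)
    (pref : ℕ → List ℕ)
    (hp1 : ∀ w ∈ WA1, Enum (pref w) JA)
    (hp2 : ∀ w ∈ WA2 ∪ WB2, Enum (pref w) JAB)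
    (hp3 : ∀ w ∈ WB1, Enum (pref w) JB) :
    let μ := (greedy C o1 pref JA ++ greedy C o2 pref JAB ++ greedy C o3 pref JB).toFinset
    (∀ w ∈ WA1 ∪ WA2 ∪ WB1 ∪ WB2, ∃ j, (w, j) ∈ μ) ∧
    (∀ M : Finset (ℕ × ℕ), IsMatching C M → M.card ≤ μ.card) ∧
    ¬ ∃ M : Finset (ℕ × ℕ), IsMatching C M ∧
      μ.card ≤ M.card ∧
      matchedWorkers (WA1 ∪ WA2) μ ≤ matchedWorkers (WA1 ∪ WA2) M ∧
      matchedJobs JA μ ≤ matchedJobs JA M ∧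
      matchedJobs JAB μ ≤ matchedJobs JAB M ∧
      (μ.card < M.card ∨ matchedWorkers (WA1 ∪ WA2) μ < matchedWorkers (WA1 ∪ WA2) M ∨
       matchedJobs JA μ < matchedJobs JA M ∨ matchedJobs JAB μ < matchedJobs JAB M) := by
  intro μ
  obtain ⟨hfst1, hsnd1⟩ := greedy_image_eq C pref ho1 hp1
    (fun w hw j hj => (hC w j).mpr (by simp [hw, hj])) hc1
  obtain ⟨hfst2, hsnd2⟩ := greedy_image_eq C pref ho2 hp2
    (fun w hw j hj => (hC w j).mpr (by simp only [Finset.mem_union] at hw ⊢; tauto)) hc3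
  obtain ⟨hfst3, hsnd3⟩ := greedy_image_eq C pref ho3 hp3
    (fun w hw j hj => (hC w j).mpr (by simp [hw, hj])) hc2
  have hfst : μ.image Prod.fst = WA1 ∪ (WA2 ∪ WB2) ∪ WB1 := by
    simp only [μ, List.toFinset_append, Finset.image_union, hfst1, hfst2, hfst3]
  have hsnd : μ.image Prod.snd = JA ∪ JAB ∪ JB := by
    simp only [μ, List.toFinset_append, Finset.image_union, hsnd1, hsnd2, hsnd3]
  have hmax : ∀ M, IsMatching C M → M.card ≤ μ.card := fun M hM =>
    hM.card_le_of_snd_mem_image fun p hp => by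
      have := (hC p.1 p.2).mp (hM.1 p hp)
      rw [hsnd]
      simp only [Finset.mem_union] at this ⊢
      tauto
  refine ⟨fun w hw => ?_, hmax, ?_⟩
  · have hw' : w ∈ μ.image Prod.fst := by
      rw [hfst]
      simp only [Finset.mem_union] at hw ⊢
      tauto
    obtain ⟨p, hp, rfl⟩ := Finset.mem_image.mp hw'
    exact ⟨p.2, hp⟩
  · rintro ⟨M, hM, -, -, -, -, hlt⟩
    have hW := matchedWorkers_le_of_subset_image hM (N := μ) (S := WA1 ∪ WA2)
      (by rw [hfst]; intro w; simp only [Finset.mem_union]; tauto)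
    have hJA := matchedJobs_le_of_subset_image hM (N := μ) (T := JA)
      (by rw [hsnd]; intro j; simp only [Finset.mem_union]; tauto)
    have hJAB := matchedJobs_le_of_subset_image hM (N := μ) (T := JAB)
      (by rw [hsnd]; intro j; simp only [Finset.mem_union]; tauto)
    have := hmax M hM
    omega

/-- Eligibility-only market where each Qing sequence of tubes pairs a worker
set with an equally-sized, fully compatible job set (`|W^A_1| = |J^A|`, `|W^B_1| = |J^B|`,
`|W^A_2 ∪ W^B_2| = |J^{AB}|`). The greedy procedure run on each tube matches every worker,
and the resulting overall matching minimizes unfilled jobs and prioritizes high-levels. -/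
theorem stmt16
    (WA1 WA2 WB1 WB2 JA JAB JB : Finset ℕ)
    (hW12 : Disjoint WA1 WA2) (hW13 : Disjoint WA1 WB1) (hW14 : Disjoint WA1 WB2)
    (hW23 : Disjoint WA2 WB1) (hW24 : Disjoint WA2 WB2) (hW34 : Disjoint WB1 WB2)
    (hJ1 : Disjoint JA JAB) (hJ2 : Disjoint JA JB) (hJ3 : Disjoint JAB JB)
    (hc1 : WA1.card = JA.card) (hc2 : WB1.card = JB.card)
    (hc3 : (WA2 ∪ WB2).card = JAB.card)
    (C : ℕ → ℕ → Bool)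
    (hC : ∀ w j, C w j = true ↔
      ((w ∈ WA1 ∪ WA2 ∧ (j ∈ JA ∨ j ∈ JAB)) ∨ (w ∈ WB1 ∪ WB2 ∧ (j ∈ JAB ∨ j ∈ JB))))
    (o1 o2 o3 : List ℕ)
    (ho1 : Enum o1 WA1) (ho2 : Enum o2 (WA2 ∪ WB2)) (ho3 : Enum o3 WB1)
    (pref : ℕ → List ℕ)
    (hp1 : ∀ w ∈ WA1, Enum (pref w) JA)
    (hp2 : ∀ w ∈ WA2 ∪ WB2, Enum (pref w) JAB)
    (hp3 : ∀ w ∈ WB1, Enum (pref w) JB) :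
    let μ := (greedy C o1 pref JA ++ greedy C o2 pref JAB ++ greedy C o3 pref JB).toFinset
    (∀ w ∈ WA1 ∪ WA2 ∪ WB1 ∪ WB2, ∃ j, (w, j) ∈ μ) ∧
    (∀ M : Finset (ℕ × ℕ), IsMatching C M → M.card ≤ μ.card) ∧
    ¬ ∃ M : Finset (ℕ × ℕ), IsMatching C M ∧
      μ.card ≤ M.card ∧
      matchedWorkers (WA1 ∪ WA2) μ ≤ matchedWorkers (WA1 ∪ WA2) M ∧
      matchedJobs JA μ ≤ matchedJobs JA M ∧
      matchedJobs JAB μ ≤ matchedJobs JAB M ∧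
      (μ.card < M.card ∨ matchedWorkers (WA1 ∪ WA2) μ < matchedWorkers (WA1 ∪ WA2) M ∨
       matchedJobs JA μ < matchedJobs JA M ∨ matchedJobs JAB μ < matchedJobs JAB M) :=
  stmt16_general WA1 WA2 WB1 WB2 JA JAB JB hc1 hc2 hc3 C hC o1 o2 o3 ho1 ho2 ho3 pref hp1 hp2 hp3
end
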